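/- Let m be a positive integer, let s > 0, and let Y_1, …, Y_m be real random variables (not assumed independent) on a common probability space such that each Y_i is Gaussian with mean 0 and variance σ_i² satisfying σ_i ≤ s. Then E[max(0, max_{i∈[m]} Y_i)] ≤ s · √(2 · ln(1 + m)). -/

import Mathlib

/-!
Bound `exp (t * max 0 (maxᵢ Yᵢ))` pointwise by `1 + ∑ᵢ exp (t * Yᵢ)`; no independence is needed
for this. Taking expectations and applying Jensen's inequality to `exp` gives
`t * E[max 0 (maxᵢ Yᵢ)] ≤ log (1 + m) + s² t² / 2` for every `t > 0`, since a centered Gaussian of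
variance at most `s²` has moment-generating function at most `exp (s² t² / 2)`. The choice
`t = √(2 log (1 + m)) / s` balances the two terms.
-/

open MeasureTheory ProbabilityTheory Real
open scoped NNReal

namespace ProbabilityTheory

variable {Ω ι : Type*} {mΩ : MeasurableSpace Ω} {μ : Measure Ω}

lemma HasSubgaussianMGF.mono {X : Ω → ℝ} {c c' : ℝ≥0} (h : HasSubgaussianMGF X c μ)
    (hc : c ≤ c') : HasSubgaussianMGF X c' μ where
  integrable_exp_mul := h.integrable_exp_mul
  mgf_le t := (h.mgf_le t).trans (exp_le_exp.mpr (by gcongr))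

lemma hasSubgaussianMGF_id_gaussianReal (v : ℝ≥0) :
    HasSubgaussianMGF id v (gaussianReal 0 v) where
  integrable_exp_mul := integrable_exp_mul_gaussianReal
  mgf_le t := by simp [mgf_id_gaussianReal]

lemma hasSubgaussianMGF_of_map_eq_gaussianReal {X : Ω → ℝ} {v : ℝ≥0}
    (hX : μ.map X = gaussianReal 0 v) : HasSubgaussianMGF X v μ := by
  have hX_meas : AEMeasurable X μ := aemeasurable_of_map_neZero (by rw [hX]; infer_instance)
  rw [← HasSubgaussianMGF.id_map_iff hX_meas, hX]
  exact hasSubgaussianMGF_id_gaussianReal v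

lemma exp_mul_max_zero_iSup_le [Fintype ι] (f : ι → ℝ) {t : ℝ} (ht : 0 ≤ t) :
    exp (t * max 0 (⨆ i, f i)) ≤ 1 + ∑ i, exp (t * f i) := by
  have hsum : 0 ≤ ∑ i, exp (t * f i) := by positivity
  cases isEmpty_or_nonempty ι
  · simp
  obtain ⟨j, hj⟩ := exists_eq_ciSup_of_finite (f := f)
  have hmono : Monotone fun x ↦ exp (t * x) := fun _ _ hxy ↦
    exp_le_exp.mpr (mul_le_mul_of_nonneg_left hxy ht)
  rw [← hj, hmono.map_max, mul_zero, exp_zero]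
  refine max_le (by linarith) ?_
  have := Finset.single_le_sum (fun i _ ↦ (exp_pos (t * f i)).le) (Finset.mem_univ j)
  linarith

variable [Fintype ι] [IsProbabilityMeasure μ] {X : ι → Ω → ℝ}

theorem exp_mul_integral_max_zero_iSup_le_one_add_sum_mgf (hX : ∀ i, AEMeasurable (X i) μ)
    {t : ℝ} (ht : 0 < t)
    (h_int : ∀ i, Integrable (fun ω ↦ exp (t * X i ω)) μ) :
    exp (t * ∫ ω, max 0 (⨆ i, X i ω) ∂μ) ≤ 1 + ∑ i, mgf (X i) μ t := by
  set M : Ω → ℝ := fun ω ↦ max 0 (⨆ i, X i ω)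
  have hM_meas : AEMeasurable M μ := aemeasurable_const.max (AEMeasurable.iSup hX)
  have h_int_sum : Integrable (fun ω ↦ 1 + ∑ i, exp (t * X i ω)) μ :=
    (integrable_const 1).add (integrable_finsetSum _ fun i _ ↦ h_int i)
  have h_int_expM : Integrable (fun ω ↦ exp (t * M ω)) μ := by
    refine h_int_sum.mono' (by fun_prop) (ae_of_all _ fun ω ↦ ?_)
    rw [norm_of_nonneg (exp_pos _).le]
    exact exp_mul_max_zero_iSup_le _ ht.le
  have h_intM : Integrable M μ := by
    refine (h_int_expM.const_mul t⁻¹).mono' hM_meas.aestronglyMeasurable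
      (ae_of_all _ fun ω ↦ ?_)
    rw [norm_of_nonneg (le_max_left _ _), le_inv_mul_iff₀ ht]
    linarith [add_one_le_exp (t * M ω)]
  have h_jensen : exp (t * ∫ ω, M ω ∂μ) ≤ ∫ ω, exp (t * M ω) ∂μ := by
    rw [← integral_const_mul]
    exact convexOn_exp.map_integral_le continuous_exp.continuousOn isClosed_univ
      (ae_of_all _ fun _ ↦ Set.mem_univ _) (h_intM.const_mul t) h_int_expM
  have h_mgf : ∫ ω, exp (t * M ω) ∂μ ≤ 1 + ∑ i, mgf (X i) μ t := by
    calc ∫ ω, exp (t * M ω) ∂μ ≤ ∫ ω, 1 + ∑ i, exp (t * X i ω) ∂μ :=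
          integral_mono h_int_expM h_int_sum fun ω ↦ exp_mul_max_zero_iSup_le _ ht.le
      _ = 1 + ∑ i, mgf (X i) μ t := by
          rw [integral_add (integrable_const 1) (integrable_finsetSum _ fun i _ ↦ h_int i),
            integral_finsetSum _ fun i _ ↦ h_int i]
          simp [mgf]
  exact h_jensen.trans h_mgf

theorem mul_integral_max_zero_iSup_le_of_hasSubgaussianMGF {c : ℝ≥0}
    (hX : ∀ i, HasSubgaussianMGF (X i) c μ) {t : ℝ} (ht : 0 < t) :
    t * ∫ ω, max 0 (⨆ i, X i ω) ∂μ ≤ log (1 + Fintype.card ι) + c * t ^ 2 / 2 := by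
  have h_sum : 1 + ∑ i, mgf (X i) μ t ≤ (1 + Fintype.card ι) * exp (c * t ^ 2 / 2) := by
    have h_one : 1 ≤ exp (c * t ^ 2 / 2) := one_le_exp (by positivity)
    have := Finset.sum_le_sum fun i (_ : i ∈ Finset.univ) ↦ (hX i).mgf_le t
    simp only [Finset.sum_const, Finset.card_univ, nsmul_eq_mul] at this
    nlinarith
  have h_exp := exp_mul_integral_max_zero_iSup_le_one_add_sum_mgf
    (fun i ↦ (hX i).aemeasurable) ht fun i ↦ (hX i).integrable_exp_mul t
  rw [← log_exp (log _ + _), exp_add, exp_log (by positivity), le_log_iff_exp_le (by positivity)]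
  exact h_exp.trans h_sum

theorem integral_max_zero_iSup_le_of_hasSubgaussianMGF [Nonempty ι] {c : ℝ≥0} (hc : 0 < c)
    (hX : ∀ i, HasSubgaussianMGF (X i) c μ) :
    ∫ ω, max 0 (⨆ i, X i ω) ∂μ ≤ √(2 * c * log (1 + Fintype.card ι)) := by
  set L := log (1 + Fintype.card ι)
  have hL : 0 < L := log_pos (by have := Fintype.card_pos (α := ι); norm_cast; omega)
  have hc' : (0 : ℝ) < c := hc
  set t := √(2 * L / c)
  have ht : 0 < t := sqrt_pos.mpr (by positivity)
  have h := mul_integral_max_zero_iSup_le_of_hasSubgaussianMGF hX ht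
  have ht_sq : c * t ^ 2 / 2 = L := by
    rw [sq_sqrt (by positivity)]
    field_simp
  have h_opt : t * √(2 * c * L) = 2 * L := by
    rw [← sqrt_mul (by positivity), show 2 * L / c * (2 * c * L) = (2 * L) ^ 2 by field_simp,
      sqrt_sq (by positivity)]
  refine le_of_mul_le_mul_left ?_ ht
  linarith

end ProbabilityTheory

theorem expected_max_gaussians_bound
    (m : ℕ) (hm : 0 < m) (s : ℝ) (hs : 0 < s)
    (Ω : Type) [MeasurableSpace Ω] (P : Measure Ω) [IsProbabilityMeasure P]
    (Y : Fin m → Ω → ℝ) (σ : Fin m → ℝ)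
    (hσ0 : ∀ i, 0 ≤ σ i) (hσs : ∀ i, σ i ≤ s)
    (hY : ∀ i, Measure.map (Y i) P = gaussianReal 0 (Real.toNNReal ((σ i) ^ 2))) :
    (∫ ω, max 0 (⨆ i, Y i ω) ∂P) ≤ s * Real.sqrt (2 * Real.log (1 + m)) := by
  have : Nonempty (Fin m) := Fin.pos_iff_nonempty.mp hm
  have hY_sub : ∀ i, HasSubgaussianMGF (Y i) (s ^ 2).toNNReal P := fun i ↦
    (hasSubgaussianMGF_of_map_eq_gaussianReal (hY i)).mono
      (toNNReal_le_toNNReal (pow_le_pow_left₀ (hσ0 i) (hσs i) 2))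
  have h := integral_max_zero_iSup_le_of_hasSubgaussianMGF (by positivity) hY_sub
  rwa [Fintype.card_fin, coe_toNNReal _ (sq_nonneg s), mul_comm 2, mul_assoc,
    sqrt_mul (sq_nonneg s), sqrt_sq hs.le] at h
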